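/- There exist random variables such that each coordinate sequence is exchangeable while the sequence of joint vectors is not. Concretely: there exist ℝ²-valued random vectors X_1 = (x_1¹, x_1²), X_2 = (x_2¹, x_2²), X_3 = (x_3¹, x_3²) such that (x_1^i, x_2^i, x_3^i) is exchangeable for each i ∈ {1,2}, but (X_1, X_2, X_3) is not exchangeable as an ℝ²-valued sequence. -/

import Mathlib

open MeasureTheory

/-- A finite sequence of random variables is exchangeable if its joint law is
invariant under every permutation of the indices. -/
def Exchangeable {Ω : Type*} [MeasurableSpace Ω] {E : Type*} [MeasurableSpace E]
    (μ : Measure Ω) {n : ℕ} (X : Fin n → Ω → E) : Prop :=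
  ∀ σ : Equiv.Perm (Fin n),
    μ.map (fun ω => fun i => X (σ i) ω) = μ.map (fun ω => fun i => X i ω)

/-!
Take three fair coins `ω 0, ω 1, ω 2` and let `X i = (ω i, ω (i + 1))`, indices mod 3. Each
coordinate sequence is a relabelling of the i.i.d. coins, hence exchangeable. But
`X 0 1 = X 1 0 = ω 1` surely, whereas after swapping `X 0` and `X 1` the corresponding
event `ω 2 = ω 0` fails with positive probability.
-/

open ProbabilityTheory

namespace Exchangeable

variable {Ω E F : Type*} [MeasurableSpace Ω] [MeasurableSpace E] [MeasurableSpace F]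
  {μ : Measure Ω} {n : ℕ} {X : Fin n → Ω → E}

theorem comp (hX : Exchangeable μ X) (hXm : ∀ i, Measurable (X i)) {g : E → F}
    (hg : Measurable g) : Exchangeable μ (fun i => g ∘ X i) := by
  intro σ
  have hgπ : Measurable fun (x : Fin n → E) i => g (x i) := by fun_prop
  have hXσ : Measurable fun ω i => X (σ i) ω := by fun_prop
  have hXv : Measurable fun ω i => X i ω := by fun_prop
  calc μ.map (fun ω i => g (X (σ i) ω))
      = (μ.map fun ω i => X (σ i) ω).map fun x i => g (x i) := (Measure.map_map hgπ hXσ).symm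
    _ = (μ.map fun ω i => X i ω).map fun x i => g (x i) := by rw [hX σ]
    _ = μ.map (fun ω i => g (X i ω)) := Measure.map_map hgπ hXv

theorem reindex (hX : Exchangeable μ X) (hXm : ∀ i, Measurable (X i)) (e : Equiv.Perm (Fin n)) :
    Exchangeable μ (fun i => X (e i)) := by
  intro σ
  -- `σ` acting on the reindexed sequence is the conjugate `e σ e⁻¹` acting on `X`.
  have hre : Measurable fun (x : Fin n → E) i => x (e i) := by fun_prop
  have hXτ : Measurable fun ω i => X (e.symm.trans (σ.trans e) i) ω := by fun_prop
  have hXv : Measurable fun ω i => X i ω := by fun_prop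
  calc μ.map (fun ω i => X (e (σ i)) ω)
      = (μ.map fun ω i => X (e.symm.trans (σ.trans e) i) ω).map fun x i => x (e i) := by
        rw [Measure.map_map hre hXτ]; congr; funext ω i; simp
    _ = (μ.map fun ω i => X i ω).map fun x i => x (e i) := by rw [hX]
    _ = μ.map (fun ω i => X (e i) ω) := Measure.map_map hre hXv

theorem measure_preimage_eq (hX : Exchangeable μ X) (hXm : ∀ i, Measurable (X i))
    (σ : Equiv.Perm (Fin n)) {S : Set (Fin n → E)} (hS : MeasurableSet S) :
    μ ((fun ω i => X (σ i) ω) ⁻¹' S) = μ ((fun ω i => X i ω) ⁻¹' S) := by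
  rw [← Measure.map_apply (by fun_prop) hS, ← Measure.map_apply (by fun_prop) hS, hX σ]

end Exchangeable

section Uniform

variable {Ω : Type*} [MeasurableSpace Ω] [DiscreteMeasurableSpace Ω] [Fintype Ω]

theorem map_uniformOn_univ_of_bijective {T : Ω → Ω} (hT : T.Bijective) :
    (uniformOn (Set.univ : Set Ω)).map T = uniformOn Set.univ := by
  ext A hA
  rw [Measure.map_apply .of_discrete hA, uniformOn_univ, uniformOn_univ,
    Measure.count_apply .of_discrete, Measure.count_apply hA, Set.encard_preimage_of_bijective hT]

theorem exchangeable_eval_uniformOn_univ {α : Type*} [MeasurableSpace α]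
    [DiscreteMeasurableSpace α] [Fintype α] {n : ℕ} :
    Exchangeable (uniformOn (Set.univ : Set (Fin n → α))) (fun i ω => ω i) := by
  intro σ
  rw [map_uniformOn_univ_of_bijective, map_uniformOn_univ_of_bijective]
  · exact Function.bijective_id
  · exact (Equiv.arrowCongr σ (Equiv.refl α)).symm.bijective

end Uniform

/-- Coordinate-wise exchangeability does not imply joint exchangeability: there exist
ℝ²-valued random vectors `X 1, X 2, X 3` whose coordinate sequences are each
exchangeable while the sequence of joint vectors is not. -/
theorem coordinatewise_not_joint_exchangeable :
    ∃ (Ω : Type) (_ : MeasurableSpace Ω) (μ : Measure Ω),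
      IsProbabilityMeasure μ ∧
      ∃ X : Fin 3 → Ω → (Fin 2 → ℝ),
        (∀ i, Measurable (X i)) ∧
        (∀ j : Fin 2, Exchangeable μ (fun i ω => X i ω j)) ∧
        ¬ Exchangeable μ X := by
  let μ := uniformOn (Set.univ : Set (Fin 3 → Bool))
  let g : Bool → ℝ := fun b => b.toNat
  let X : Fin 3 → (Fin 3 → Bool) → Fin 2 → ℝ := fun i ω => ![g (ω i), g (ω (i + 1))]
  have hcoord : Exchangeable μ (fun i ω => ω i) := exchangeable_eval_uniformOn_univ
  have hω (i : Fin 3) : Measurable fun ω : Fin 3 → Bool => ω i := measurable_pi_apply i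
  have hg : Measurable g := .of_discrete
  have hg_inj : g.Injective := by intro a b; cases a <;> cases b <;> simp [g]
  refine ⟨_, _, μ, inferInstance, X, fun i => .of_discrete, ?_, ?_⟩
  · intro j
    fin_cases j
    · exact hcoord.comp hω hg
    · exact (hcoord.reindex hω (Equiv.addRight 1)).comp (fun _ => hω _) hg
  · intro hX
    let S : Set (Fin 3 → Fin 2 → ℝ) := {x | x 0 1 ≠ x 1 0}
    have hS : MeasurableSet S := (measurableSet_eq_fun (by fun_prop) (by fun_prop)).compl
    have hswap : (fun ω i => X (Equiv.swap 0 1 i) ω) ⁻¹' S = {ω | ω 2 ≠ ω 0} := by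
      ext ω; simpa [S, X] using hg_inj.ne_iff
    have hid : (fun ω i => X i ω) ⁻¹' S = ∅ := by
      ext ω; simp [S, X]
    have h := hX.measure_preimage_eq (fun _ => .of_discrete) (Equiv.swap 0 1) hS
    rw [hswap, hid, measure_empty, uniformOn_eq_zero_iff Set.finite_univ, Set.univ_inter] at h
    exact Set.nonempty_iff_ne_empty.mp ⟨![true, false, false], by simp⟩ h
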